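/- arXiv:2402.08925 — 2 statements merged into one kernel-verified Lean document; each statement's English description precedes it below -/
import Mathlib

section
/- Let Z be a nonempty set, U a finite index set with |U| ≥ 2, weights η : U → [0,1] summing to 1, preference models p_k : Z → [0,1] for k ∈ U, and p̄(z) = Σ_{k∈U} η(k) p_k(z). With d(p, q) = sup_{z∈Z} |p(z) − q(z)|, for any u, j ∈ U it holds that d(p_u, p̄) ≥ (1 − η(u)) d(p_u, p_j) − Σ_{k∈U, k≠u} η(k) d(p_k, p_j) ≥ (1 − η(u)) (d(p_u, p_j) − max_{k∈U, k≠u} d(p_k, p_j)). -/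
open scoped BigOperators

/-- **Mixture-distance lower bound** (key step in proof of Lemma 1).
With `d(p, q) = ⨆ z, |p z - q z|` and mixture `p̄ = ∑ k, η k • p k`, for any `u, j`:
`d(p_u, p̄) ≥ (1 - η u) d(p_u, p_j) - ∑_{k ≠ u} η k d(p_k, p_j)`
`          ≥ (1 - η u) (d(p_u, p_j) - max_{k ≠ u} d(p_k, p_j))`. -/
theorem stmt_5 {Z U : Type*} [Nonempty Z] [Fintype U] [DecidableEq U]
    (hU : 1 < Fintype.card U)
    (η : U → ℝ) (hη0 : ∀ u, 0 ≤ η u) (hηsum : ∑ u, η u = 1)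
    (p : U → Z → ℝ) (hp : ∀ u z, p u z ∈ Set.Icc (0 : ℝ) 1)
    (pbar : Z → ℝ) (hpbar : ∀ z, pbar z = ∑ k, η k * p k z)
    (dist : (Z → ℝ) → (Z → ℝ) → ℝ)
    (hdist : ∀ a b, dist a b = ⨆ z, |a z - b z|)
    (u j : U) (hne : (Finset.univ.erase u).Nonempty) :
    (1 - η u) * dist (p u) (p j) -
        (∑ k ∈ Finset.univ.erase u, η k * dist (p k) (p j)) ≤ dist (p u) pbar ∧
    (1 - η u) *
        (dist (p u) (p j) - (Finset.univ.erase u).sup' hne fun k => dist (p k) (p j)) ≤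
      (1 - η u) * dist (p u) (p j) -
        ∑ k ∈ Finset.univ.erase u, η k * dist (p k) (p j) := by
  -- basics
  have hpbarmem : ∀ z, pbar z ∈ Set.Icc (0:ℝ) 1 := by
    intro z
    rw [hpbar z]
    constructor
    · exact Finset.sum_nonneg fun k _ => mul_nonneg (hη0 k) (hp k z).1
    · calc ∑ k, η k * p k z ≤ ∑ k, η k := by
            apply Finset.sum_le_sum
            intro k _
            nlinarith [(hp k z).2, hη0 k]
        _ = 1 := hηsum
  have hbdd : ∀ a b : Z → ℝ, (∀ z, |a z - b z| ≤ 1) →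
      BddAbove (Set.range fun z => |a z - b z|) := by
    intro a b h
    exact ⟨1, by rintro x ⟨z, rfl⟩; exact h z⟩
  have hbdd1 : ∀ a : U, BddAbove (Set.range fun z => |p a z - pbar z|) := by
    intro a
    refine hbdd _ _ fun z => ?_
    have h1 := hp a z; have h2 := hpbarmem z
    rw [abs_le]; constructor <;> [linarith [h1.1, h1.2, h2.1, h2.2];
      linarith [h1.1, h1.2, h2.1, h2.2]]
  have hbdd2 : ∀ a b : U, BddAbove (Set.range fun z => |p a z - p b z|) := by
    intro a b
    refine hbdd _ _ fun z => ?_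
    have h1 := hp a z; have h2 := hp b z
    rw [abs_le]; constructor <;> [linarith [h1.1, h1.2, h2.1, h2.2];
      linarith [h1.1, h1.2, h2.1, h2.2]]
  have hle_dist : ∀ a b : U, ∀ z, |p a z - p b z| ≤ dist (p a) (p b) := by
    intro a b z
    rw [hdist]
    exact le_ciSup (hbdd2 a b) z
  have hle_distbar : ∀ z, |p u z - pbar z| ≤ dist (p u) pbar := by
    intro z
    rw [hdist]
    exact le_ciSup (hbdd1 u) z
  have hηu : 1 - η u = ∑ k ∈ Finset.univ.erase u, η k := by
    have := Finset.add_sum_erase Finset.univ η (Finset.mem_univ u)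
    rw [hηsum] at this
    linarith
  have hηu0 : 0 ≤ 1 - η u := by
    rw [hηu]
    exact Finset.sum_nonneg fun k _ => hη0 k
  -- pointwise key inequality
  have key : ∀ z, (1 - η u) * |p u z - p j z| ≤
      dist (p u) pbar + ∑ k ∈ Finset.univ.erase u, η k * dist (p k) (p j) := by
    intro z
    have hsum : (1 - η u) * (p u z - p j z) =
        (p u z - pbar z) + ∑ k ∈ Finset.univ.erase u, η k * (p k z - p j z) := by
      have h1 : p u z - pbar z = ∑ k ∈ Finset.univ.erase u, η k * (p u z - p k z) := by
        rw [Finset.sum_erase (f := fun k => η k * (p u z - p k z)) Finset.univ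
          (by simp : η u * (p u z - p u z) = 0)]
        rw [hpbar z]
        have h2 : ∑ k : U, η k * (p u z - p k z)
            = (∑ k : U, η k) * p u z - ∑ k : U, η k * p k z := by
          rw [Finset.sum_mul, ← Finset.sum_sub_distrib]
          apply Finset.sum_congr rfl
          intro k _; ring
        rw [h2, hηsum]; ring
      rw [h1, hηu, Finset.sum_mul, ← Finset.sum_add_distrib]
      apply Finset.sum_congr rfl
      intro k _; ring
    calc (1 - η u) * |p u z - p j z| = |(1 - η u) * (p u z - p j z)| := by
          rw [abs_mul, abs_of_nonneg hηu0]
      _ ≤ |p u z - pbar z| + |∑ k ∈ Finset.univ.erase u, η k * (p k z - p j z)| := by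
          rw [hsum]; exact abs_add_le _ _
      _ ≤ dist (p u) pbar + ∑ k ∈ Finset.univ.erase u, η k * dist (p k) (p j) := by
          apply add_le_add (hle_distbar z)
          calc |∑ k ∈ Finset.univ.erase u, η k * (p k z - p j z)|
              ≤ ∑ k ∈ Finset.univ.erase u, |η k * (p k z - p j z)| :=
                Finset.abs_sum_le_sum_abs _ _
            _ ≤ ∑ k ∈ Finset.univ.erase u, η k * dist (p k) (p j) := by
                apply Finset.sum_le_sum
                intro k _
                rw [abs_mul, abs_of_nonneg (hη0 k)]
                exact mul_le_mul_of_nonneg_left (hle_dist k j z) (hη0 k)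
  constructor
  · rw [sub_le_iff_le_add, hdist]
    rw [Real.mul_iSup_of_nonneg hηu0]
    apply ciSup_le
    intro z
    linarith [key z]
  · rw [mul_sub]
    have hmax : ∑ k ∈ Finset.univ.erase u, η k * dist (p k) (p j) ≤
        (1 - η u) * (Finset.univ.erase u).sup' hne fun k => dist (p k) (p j) := by
      rw [hηu, Finset.sum_mul]
      apply Finset.sum_le_sum
      intro k hk
      exact mul_le_mul_of_nonneg_left (Finset.le_sup' (fun k => dist (p k) (p j)) hk) (hη0 k)
    linarith
end

section
/- (Lemma 1, reward mismatch due to diversity.) Let d ≥ 1, D > 0, and let ψ assign to each response–prompt pair a feature vector in ℝ^d of norm at most D, with Bradley–Terry preference probabilities p_φ(z) = σ(⟨φ, ψ(y₁, x) − ψ(y₂, x)⟩) over a fixed set Z of comparisons, where σ(t) = 1/(1 + e^{−t}). Let U be a finite set of sub-population groups with |U| ≥ 2, let φ_k ∈ ℝ^d be the reward parameter of group k, let η : U → [0,1] be weights summing to 1, and suppose φ* ∈ ℝ^d satisfies p_{φ*}(z) = Σ_{k∈U} η(k) p_{φ_k}(z) for all z ∈ Z. Fix u, j ∈ U and suppose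 the diversity margin ε := d(p_{φ_u}, p_{φ_j}) − max_{k∈U, k≠u} d(p_{φ_k}, p_{φ_j}) is strictly positive, where d(p, q) = sup_{z∈Z} |p(z) − q(z)|. Then ‖φ* − φ_u‖ ≥ ε (1 − η(u)) / (4D). -/
/-!
Write `p_k` for `p_{φ_k}` and `p*` for `p_{φ*}`. At every comparison `z`, the mixture identity gives
`p* - p_j = η_u (p_u - p_j) + ∑_{k ≠ u} η_k (p_k - p_j)`, so by the triangle inequality through `p*`
`(1 - η_u) |p_u - p_j| ≤ |p_u - p*| + (1 - η_u) max_{k ≠ u} d(p_k, p_j)`.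
Since the logistic function is `1/4`-Lipschitz and `‖ψ(y₁, x) - ψ(y₂, x)‖ ≤ 2D`, the map `φ ↦ p_φ(z)` is
`D/2`-Lipschitz, so `|p_u - p*| ≤ (D/2) ‖φ* - φ_u‖`. Taking the supremum over `z` yields
`(1 - η_u) ε ≤ (D/2) ‖φ* - φ_u‖`, which is stronger than the claim.
-/

open Finset Real

namespace Real

lemma abs_sigmoid_sub_sigmoid_le_one (a b : ℝ) : |sigmoid a - sigmoid b| ≤ 1 :=
  abs_sub_le_of_nonneg_of_le (sigmoid_nonneg a) (sigmoid_le_one a)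
    (sigmoid_nonneg b) (sigmoid_le_one b)

lemma lipschitzWith_sigmoid : LipschitzWith 4⁻¹ sigmoid := by
  refine lipschitzWith_of_nnnorm_deriv_le differentiable_sigmoid fun t => ?_
  rw [← NNReal.coe_le_coe, coe_nnnorm, deriv_sigmoid, Real.norm_eq_abs,
    abs_of_nonneg (mul_nonneg (sigmoid_nonneg t) (sub_nonneg.2 (sigmoid_le_one t)))]
  push_cast
  nlinarith [sq_nonneg (sigmoid t - 2⁻¹)]

lemma abs_sigmoid_inner_sub_sigmoid_inner_le {E : Type*} [NormedAddCommGroup E]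
    [InnerProductSpace ℝ E] (φ φ' v : E) :
    |sigmoid (inner ℝ φ v) - sigmoid (inner ℝ φ' v)| ≤ ‖φ - φ'‖ * ‖v‖ / 4 :=
  calc |sigmoid (inner ℝ φ v) - sigmoid (inner ℝ φ' v)|
      ≤ 4⁻¹ * |inner ℝ φ v - inner ℝ φ' v| := by
        simpa [Real.dist_eq] using lipschitzWith_sigmoid.dist_le_mul (inner ℝ φ v) (inner ℝ φ' v)
    _ = 4⁻¹ * |inner ℝ (φ - φ') v| := by rw [inner_sub_left]
    _ ≤ 4⁻¹ * (‖φ - φ'‖ * ‖v‖) := by gcongr; exact abs_real_inner_le_norm _ _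
    _ = ‖φ - φ'‖ * ‖v‖ / 4 := by ring

end Real

lemma one_sub_mul_abs_sub_le_of_mixture {U : Type*} [Fintype U] [DecidableEq U]
    {η a : U → ℝ} (hη0 : ∀ k, 0 ≤ η k) (hηsum : ∑ k, η k = 1) {u : U} {b M : ℝ}
    (hM : ∀ k ≠ u, |a k - b| ≤ M) :
    (1 - η u) * |a u - b| ≤ |a u - ∑ k, η k * a k| + (1 - η u) * M := by
  have hrest : ∑ k ∈ univ.erase u, η k = 1 - η u := by
    rw [← hηsum, ← add_sum_erase _ _ (mem_univ u), add_sub_cancel_left]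
  have hsplit : (1 - η u) * (a u - b) =
      (a u - ∑ k, η k * a k) + ∑ k ∈ univ.erase u, η k * (a k - b) := by
    rw [← add_sum_erase univ (fun k => η k * a k) (mem_univ u)]
    simp only [mul_sub, sum_sub_distrib, ← sum_mul, hrest]
    ring
  have hu : 0 ≤ 1 - η u := hrest ▸ sum_nonneg fun k _ => hη0 k
  calc (1 - η u) * |a u - b| = |(1 - η u) * (a u - b)| := by rw [abs_mul, abs_of_nonneg hu]
    _ ≤ |a u - ∑ k, η k * a k| + ∑ k ∈ univ.erase u, |η k * (a k - b)| := by
        rw [hsplit]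
        exact (abs_add_le _ _).trans (add_le_add_right (abs_sum_le_sum_abs _ _) _)
    _ ≤ |a u - ∑ k, η k * a k| + ∑ k ∈ univ.erase u, η k * M := by
        gcongr with k hk
        rw [abs_mul, abs_of_nonneg (hη0 k)]
        exact mul_le_mul_of_nonneg_left (hM k (ne_of_mem_erase hk)) (hη0 k)
    _ = |a u - ∑ k, η k * a k| + (1 - η u) * M := by rw [← sum_mul, hrest]

theorem stmt_7_general {d : ℕ} {Y X Z U : Type*} [Nonempty Z]
    [Fintype U] [DecidableEq U]
    (D : ℝ) (hD : 0 < D)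
    (ψ : Y → X → EuclideanSpace ℝ (Fin d)) (hψ : ∀ y x, ‖ψ y x‖ ≤ D)
    (y₁ y₂ : Z → Y) (x : Z → X)
    (σ : ℝ → ℝ) (hσ : ∀ t, σ t = 1 / (1 + Real.exp (-t)))
    (p : EuclideanSpace ℝ (Fin d) → Z → ℝ)
    (hp : ∀ φ z, p φ z = σ ((inner ℝ φ (ψ (y₁ z) (x z) - ψ (y₂ z) (x z)) : ℝ)))
    (φs : U → EuclideanSpace ℝ (Fin d))
    (η : U → ℝ) (hη0 : ∀ k, 0 ≤ η k) (hηsum : ∑ k, η k = 1)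
    (φstar : EuclideanSpace ℝ (Fin d))
    (hmix : ∀ z, p φstar z = ∑ k, η k * p (φs k) z)
    (dist : (Z → ℝ) → (Z → ℝ) → ℝ)
    (hdist : ∀ a b, dist a b = ⨆ z, |a z - b z|)
    (u j : U) (hne : (Finset.univ.erase u).Nonempty)
    (ε : ℝ)
    (hε : ε = dist (p (φs u)) (p (φs j)) -
      (Finset.univ.erase u).sup' hne fun k => dist (p (φs k)) (p (φs j))) :
    ε * (1 - η u) / (4 * D) ≤ ‖φstar - φs u‖ := by
  have hσ' : σ = sigmoid := funext fun t => by rw [hσ, one_div, sigmoid_def]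
  simp only [hσ'] at hp
  set M := (univ.erase u).sup' hne fun k => dist (p (φs k)) (p (φs j))
  have hM : ∀ k ≠ u, ∀ z, |p (φs k) z - p (φs j) z| ≤ M := fun k hk z => by
    refine le_trans ?_ (le_sup' (fun k => dist (p (φs k)) (p (φs j))) (by simpa using hk))
    rw [hdist]
    refine le_ciSup (f := fun z => |p (φs k) z - p (φs j) z|) ⟨1, ?_⟩ z
    rintro _ ⟨z', rfl⟩
    simp only [hp, abs_sigmoid_sub_sigmoid_le_one]
  have hlip : ∀ z, |p (φs u) z - p φstar z| ≤ D / 2 * ‖φstar - φs u‖ := fun z => by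
    have hv : ‖ψ (y₁ z) (x z) - ψ (y₂ z) (x z)‖ ≤ 2 * D :=
      (norm_sub_le _ _).trans (by linarith [hψ (y₁ z) (x z), hψ (y₂ z) (x z)])
    rw [hp, hp, norm_sub_rev]
    refine (abs_sigmoid_inner_sub_sigmoid_inner_le _ _ _).trans ?_
    nlinarith [norm_nonneg (φs u - φstar)]
  have hu : 0 ≤ 1 - η u :=
    sub_nonneg.2 (hηsum ▸ single_le_sum (fun k _ => hη0 k) (mem_univ u))
  have hgap : (1 - η u) * dist (p (φs u)) (p (φs j)) ≤
      D / 2 * ‖φstar - φs u‖ + (1 - η u) * M := by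
    rw [hdist, Real.mul_iSup_of_nonneg hu]
    refine ciSup_le fun z => (one_sub_mul_abs_sub_le_of_mixture hη0 hηsum (hM · · z)).trans ?_
    rw [← hmix]
    gcongr
    exact hlip z
  rw [div_le_iff₀ (by positivity), hε]
  nlinarith [norm_nonneg (φstar - φs u)]

/-- **Lemma 1 (Reward mismatch due to diversity).**
For Bradley–Terry preference probabilities with features bounded by `D`, group reward
parameters `φ k`, weights `η` summing to 1, and aggregate parameter `φ*` matching the
η-mixture of the group preference probabilities, if the diversity margin
`ε = d(p_{φ_u}, p_{φ_j}) - max_{k ≠ u} d(p_{φ_k}, p_{φ_j})` is positive, then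
`‖φ* - φ_u‖ ≥ ε (1 - η u) / (4 D)`. -/
theorem stmt_7 {d : ℕ} (hd : 1 ≤ d) {Y X Z U : Type*} [Nonempty Z]
    [Fintype U] [DecidableEq U] (hU : 1 < Fintype.card U)
    (D : ℝ) (hD : 0 < D)
    (ψ : Y → X → EuclideanSpace ℝ (Fin d)) (hψ : ∀ y x, ‖ψ y x‖ ≤ D)
    (y₁ y₂ : Z → Y) (x : Z → X)
    (σ : ℝ → ℝ) (hσ : ∀ t, σ t = 1 / (1 + Real.exp (-t)))
    (p : EuclideanSpace ℝ (Fin d) → Z → ℝ)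
    (hp : ∀ φ z, p φ z = σ ((inner ℝ φ (ψ (y₁ z) (x z) - ψ (y₂ z) (x z)) : ℝ)))
    (φs : U → EuclideanSpace ℝ (Fin d))
    (η : U → ℝ) (hη0 : ∀ k, 0 ≤ η k) (hη1 : ∀ k, η k ≤ 1) (hηsum : ∑ k, η k = 1)
    (φstar : EuclideanSpace ℝ (Fin d))
    (hmix : ∀ z, p φstar z = ∑ k, η k * p (φs k) z)
    (dist : (Z → ℝ) → (Z → ℝ) → ℝ)
    (hdist : ∀ a b, dist a b = ⨆ z, |a z - b z|)
    (u j : U) (hne : (Finset.univ.erase u).Nonempty)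
    (ε : ℝ)
    (hε : ε = dist (p (φs u)) (p (φs j)) -
      (Finset.univ.erase u).sup' hne fun k => dist (p (φs k)) (p (φs j)))
    (hεpos : 0 < ε) :
    ε * (1 - η u) / (4 * D) ≤ ‖φstar - φs u‖ :=
  stmt_7_general D hD ψ hψ y₁ y₂ x σ hσ p hp φs η hη0 hηsum φstar hmix dist hdist u j hne ε hε
end
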